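/- arXiv:1811.04363 — 9 statements merged into one kernel-verified Lean document; each statement's English description precedes it below -/
import Mathlib

section
/- For every ρ > 0, A > 0 and ε > 0 there exists N ∈ ℕ such that for all integers n ≥ N and all real a ∈ (0, A]: ∑_{k=1}^∞ k^ρ (1 − e^{−na})^{k−1} ≤ e^{n(1+ρ)(a+ε)}. (This is Lemma 1 of the paper, stated with convergence uniform over a in a bounded range.) -/
/-!
With `q = e^{-na}`, the elementary bound `s^ρ ≤ ρ^ρ e^s` applied to `s = (k+1)q/2` dominates
`(k+1)^ρ` by `(2ρ/q)^ρ e^{(k+1)q/2}`. This turns the series into a geometric one with ratio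
`(1-q)e^{q/2} ≤ 1 - q/2`, so it is at most `K q^{-(1+ρ)} = K e^{na(1+ρ)}` with `K` depending only
on `ρ`; for large `n` the constant `K` is absorbed by `e^{n(1+ρ)ε}`.
-/

open Real

lemma rpow_le_rpow_self_mul_exp {ρ s : ℝ} (hρ : 0 < ρ) (hs : 0 < s) :
    s ^ ρ ≤ ρ ^ ρ * exp s := by
  rw [rpow_def_of_pos hs, rpow_def_of_pos hρ, ← exp_add, exp_le_exp]
  have hlog : log (s / ρ) ≤ s / ρ - 1 := log_le_sub_one_of_pos (by positivity)
  rw [log_div hs.ne' hρ.ne'] at hlog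
  have : s / ρ * ρ = s := div_mul_cancel₀ s hρ.ne'
  nlinarith [mul_le_mul_of_nonneg_right hlog hρ.le]

lemma add_one_rpow_le_mul_exp_pow {ρ t : ℝ} (hρ : 0 < ρ) (ht : 0 < t) (k : ℕ) :
    ((k : ℝ) + 1) ^ ρ ≤ (ρ / t) ^ ρ * exp t * exp t ^ k := by
  have hbound := rpow_le_rpow_self_mul_exp hρ (by positivity : 0 < ((k : ℝ) + 1) * t)
  rw [mul_rpow (by positivity) ht.le, ← le_div_iff₀ (by positivity)] at hbound
  calc ((k : ℝ) + 1) ^ ρ ≤ ρ ^ ρ * exp (((k : ℝ) + 1) * t) / t ^ ρ := hbound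
    _ = (ρ / t) ^ ρ * exp t * exp t ^ k := by
      rw [div_rpow hρ.le ht.le, ← exp_nat_mul, mul_assoc _ (exp t), ← exp_add]
      ring_nf

lemma tsum_add_one_rpow_mul_pow_le {ρ t x : ℝ} (hρ : 0 < ρ) (ht : 0 < t) (hx : 0 ≤ x)
    (hxt : x * exp t < 1) :
    ∑' k : ℕ, ((k : ℝ) + 1) ^ ρ * x ^ k ≤ (ρ / t) ^ ρ * exp t / (1 - x * exp t) := by
  have hterm (k : ℕ) : ((k : ℝ) + 1) ^ ρ * x ^ k ≤ (ρ / t) ^ ρ * exp t * (x * exp t) ^ k := by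
    calc ((k : ℝ) + 1) ^ ρ * x ^ k ≤ (ρ / t) ^ ρ * exp t * exp t ^ k * x ^ k :=
          mul_le_mul_of_nonneg_right (add_one_rpow_le_mul_exp_pow hρ ht k) (by positivity)
      _ = (ρ / t) ^ ρ * exp t * (x * exp t) ^ k := by ring
  have hgeom := (summable_geometric_of_lt_one (by positivity) hxt).mul_left ((ρ / t) ^ ρ * exp t)
  calc ∑' k : ℕ, ((k : ℝ) + 1) ^ ρ * x ^ k
      ≤ ∑' k : ℕ, (ρ / t) ^ ρ * exp t * (x * exp t) ^ k :=
        (hgeom.of_nonneg_of_le (fun k => by positivity) hterm).tsum_le_tsum hterm hgeom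
    _ = (ρ / t) ^ ρ * exp t / (1 - x * exp t) := by
      rw [tsum_mul_left, tsum_geometric_of_lt_one (by positivity) hxt,
        div_eq_mul_inv _ (1 - _)]

lemma one_sub_mul_exp_half_le {q : ℝ} (hq : 0 ≤ q) : (1 - q) * exp (q / 2) ≤ 1 - q / 2 := by
  have hone : exp (q / 2) * (1 - q / 2) ≤ 1 := by
    have := mul_le_mul_of_nonneg_left (add_one_le_exp (-(q / 2))) (exp_pos (q / 2)).le
    rwa [← exp_add, add_neg_cancel, exp_zero, ← sub_eq_neg_add] at this
  nlinarith [one_le_exp (by positivity : 0 ≤ q / 2)]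

lemma tsum_add_one_rpow_mul_one_sub_pow_le {ρ q : ℝ} (hρ : 0 < ρ) (hq : 0 < q) (hq1 : q ≤ 1) :
    ∑' k : ℕ, ((k : ℝ) + 1) ^ ρ * (1 - q) ^ k ≤ 2 * (2 * ρ) ^ ρ * exp 1 / q ^ (1 + ρ) := by
  have hgap : q / 2 ≤ 1 - (1 - q) * exp (q / 2) := by linarith [one_sub_mul_exp_half_le hq.le]
  calc ∑' k : ℕ, ((k : ℝ) + 1) ^ ρ * (1 - q) ^ k
      ≤ (ρ / (q / 2)) ^ ρ * exp (q / 2) / (1 - (1 - q) * exp (q / 2)) :=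
        tsum_add_one_rpow_mul_pow_le hρ (by positivity) (by linarith) (by linarith)
    _ ≤ (ρ / (q / 2)) ^ ρ * exp 1 / (q / 2) := by
      gcongr
      linarith
    _ = 2 * (2 * ρ) ^ ρ * exp 1 / q ^ (1 + ρ) := by
      rw [rpow_add hq, rpow_one, show ρ / (q / 2) = 2 * ρ / q by ring,
        div_rpow (by positivity) hq.le]
      field_simp

theorem universal_geometric_moment_bound_general (ρ A ε : ℝ) (hρ : 0 < ρ) (hε : 0 < ε) :
    ∃ N : ℕ, ∀ n : ℕ, N ≤ n → ∀ a : ℝ, 0 < a → a ≤ A →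
      ∑' k : ℕ, ((k : ℝ) + 1) ^ ρ * (1 - Real.exp (-(n : ℝ) * a)) ^ k ≤
        Real.exp ((n : ℝ) * (1 + ρ) * (a + ε)) := by
  set K := 2 * (2 * ρ) ^ ρ * exp 1
  have hgrowth : Filter.Tendsto (fun n : ℕ => exp (n * ((1 + ρ) * ε))) Filter.atTop Filter.atTop :=
    tendsto_exp_atTop.comp (tendsto_natCast_atTop_atTop.atTop_mul_const (by positivity))
  obtain ⟨N, hN⟩ := Filter.eventually_atTop.mp (hgrowth.eventually_ge_atTop K)
  refine ⟨N, fun n hn a ha _ => ?_⟩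
  have hq1 : exp (-(n : ℝ) * a) ≤ 1 := exp_le_one_iff.mpr (by nlinarith [n.cast_nonneg (α := ℝ)])
  calc ∑' k : ℕ, ((k : ℝ) + 1) ^ ρ * (1 - exp (-(n : ℝ) * a)) ^ k
      ≤ K / exp (-(n : ℝ) * a) ^ (1 + ρ) :=
        tsum_add_one_rpow_mul_one_sub_pow_le hρ (exp_pos _) hq1
    _ = K * exp (n * a * (1 + ρ)) := by
      rw [← exp_mul, div_eq_mul_inv, ← exp_neg]
      ring_nf
    _ ≤ exp (n * ((1 + ρ) * ε)) * exp (n * a * (1 + ρ)) := by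
      gcongr
      exact hN n hn
    _ = exp ((n : ℝ) * (1 + ρ) * (a + ε)) := by
      rw [← exp_add]
      ring_nf

/-- Lemma 1 of the paper (uniform over `a ∈ (0, A]`): for every `ρ > 0`, `A > 0` and
`ε > 0` there is `N` such that for all `n ≥ N` and all `a ∈ (0, A]`,
`∑_{k=1}^∞ k^ρ (1 - e^{-na})^{k-1} ≤ e^{n(1+ρ)(a+ε)}`. -/
theorem universal_geometric_moment_bound (ρ A ε : ℝ) (hρ : 0 < ρ) (hA : 0 < A) (hε : 0 < ε) :
    ∃ N : ℕ, ∀ n : ℕ, N ≤ n → ∀ a : ℝ, 0 < a → a ≤ A →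
      ∑' k : ℕ, ((k : ℝ) + 1) ^ ρ * (1 - Real.exp (-(n : ℝ) * a)) ^ k ≤
        Real.exp ((n : ℝ) * (1 + ρ) * (a + ε)) :=
  universal_geometric_moment_bound_general ρ A ε hρ hε
end

section
/- For every real ρ > 0, a > 0 and ε > 0 there exists N ∈ ℕ such that for all integers n ≥ N: ∑_{k=⌈e^{n(a+ε)}⌉}^{∞} k^ρ (1 − e^{−na})^{k−1} ≤ exp(−e^{nε}/2). In particular this tail of the series decays double-exponentially fast in n. -/
/-!
Write `b = e^{-na}` and `M = ⌈e^{n(a+ε)}⌉`, so that `bM ≥ e^{nε}`. From `log k ≤ k^θ / θ` with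
`θ = ε / (2(a+ε))` one gets `k^ρ ≤ e^{bk/4}` for all `k ≥ M` once `n` is large, while
`(1 - b)^{k-1} ≤ e^{-b(k-1)}`. The tail is therefore dominated by a geometric series of ratio
`e^{-3b/4}` starting at `M`, whose sum is at most `e^{3 - 3bM/4} / b = e^{3 + na - 3bM/4}`; this is
below `e^{-e^{nε}/2}` as soon as `e^{nε} ≥ 12 + 4na`.
-/

open Filter Real

lemma eventually_const_add_mul_le_exp (A B : ℝ) {c : ℝ} (hc : 0 < c) :
    ∀ᶠ n : ℕ in atTop, A + B * n ≤ exp (n * c) := by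
  have h : (fun x : ℝ => A * x ^ 0 + B * x ^ 1) =o[atTop] fun x => exp (c * x) :=
    ((isLittleO_pow_exp_pos_mul_atTop 0 hc).const_mul_left A).add
      ((isLittleO_pow_exp_pos_mul_atTop 1 hc).const_mul_left B)
  filter_upwards [tendsto_natCast_atTop_atTop.eventually (h.bound one_pos)] with n hn
  simp only [pow_zero, mul_one, pow_one, norm_eq_abs, abs_exp, one_mul] at hn
  rw [mul_comm (n : ℝ)]
  exact (le_abs_self _).trans hn

lemma rpow_le_exp_mul_of_div_le {ρ θ c k : ℝ} (hρ : 0 ≤ ρ) (hθ : 0 < θ) (hk : 0 < k)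
    (h : ρ / θ ≤ c * k ^ (1 - θ)) : k ^ ρ ≤ exp (c * k) := by
  rw [rpow_def_of_pos hk, exp_le_exp]
  calc log k * ρ ≤ k ^ θ / θ * ρ := mul_le_mul_of_nonneg_right (log_le_rpow_div hk.le hθ) hρ
    _ = k ^ θ * (ρ / θ) := by ring
    _ ≤ k ^ θ * (c * k ^ (1 - θ)) := mul_le_mul_of_nonneg_left h (rpow_nonneg hk.le θ)
    _ = c * k := by rw [mul_left_comm, ← rpow_add hk, add_sub_cancel, rpow_one]

lemma rpow_le_exp_mul_of_exp_le {ρ a ε x k : ℝ} (hρ : 0 ≤ ρ) (ha : 0 ≤ a) (hε : 0 < ε)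
    (hx : 8 * ρ * (a + ε) / ε ≤ exp (x * (ε / 2))) (hk : exp (x * (a + ε)) ≤ k) :
    k ^ ρ ≤ exp (exp (-x * a) / 4 * k) := by
  -- `θ = ε / (2 * (a + ε))` is chosen so that `(a + ε) * (1 - θ) = a + ε / 2`
  have hθ : 0 < ε / (2 * (a + ε)) := by positivity
  have hθ1 : ε / (2 * (a + ε)) ≤ 1 := by rw [div_le_one (by positivity)]; linarith
  refine rpow_le_exp_mul_of_div_le hρ hθ ((exp_pos _).trans_le hk) ?_
  calc ρ / (ε / (2 * (a + ε))) = 8 * ρ * (a + ε) / ε / 4 := by field_simp; ring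
    _ ≤ exp (x * (ε / 2)) / 4 := by gcongr
    _ = exp (-x * a) / 4 * exp (x * (a + ε)) ^ (1 - ε / (2 * (a + ε))) := by
        rw [← exp_mul, div_mul_eq_mul_div, ← exp_add]
        congr 2
        field_simp
        ring
    _ ≤ exp (-x * a) / 4 * k ^ (1 - ε / (2 * (a + ε))) := by gcongr

lemma inv_one_sub_exp_neg_le {x : ℝ} (hx : 0 < x) : (1 - exp (-x))⁻¹ ≤ 1 + x⁻¹ := by
  have h : exp (-x) ≤ (1 + x)⁻¹ := by
    rw [exp_neg]
    exact inv_anti₀ (by positivity) (by linarith [add_one_le_exp x])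
  calc (1 - exp (-x))⁻¹ ≤ (1 - (1 + x)⁻¹)⁻¹ := by
        refine inv_anti₀ ?_ (by linarith)
        rw [sub_pos]
        exact inv_lt_one_of_one_lt₀ (by linarith)
    _ = 1 + x⁻¹ := by field_simp [hx.ne']; ring

lemma tsum_le_of_le_geometric {f : ℕ → ℝ} {A r : ℝ} (hf : ∀ j, 0 ≤ f j) (hr0 : 0 ≤ r)
    (hr1 : r < 1) (h : ∀ j, f j ≤ A * r ^ j) : ∑' j, f j ≤ A * (1 - r)⁻¹ := by
  have hg : Summable fun j => A * r ^ j := (summable_geometric_of_lt_one hr0 hr1).mul_left A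
  calc ∑' j, f j ≤ ∑' j, A * r ^ j := (hg.of_nonneg_of_le hf h).tsum_le_tsum h hg
    _ = A * (1 - r)⁻¹ := by rw [tsum_mul_left, tsum_geometric_of_lt_one hr0 hr1]

lemma rpow_mul_one_sub_pow_le {ρ b : ℝ} {k : ℕ} (hk : 1 ≤ k) (hb1 : b ≤ 1)
    (hpoly : (k : ℝ) ^ ρ ≤ exp (b / 4 * k)) :
    (k : ℝ) ^ ρ * (1 - b) ^ (k - 1) ≤ exp b * exp (-(3 / 4 * b)) ^ k := by
  obtain ⟨m, rfl⟩ := Nat.exists_eq_add_of_le' hk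
  calc ((m + 1 : ℕ) : ℝ) ^ ρ * (1 - b) ^ (m + 1 - 1)
      ≤ exp (b / 4 * (m + 1 : ℕ)) * exp (-b) ^ m := by
        rw [Nat.add_sub_cancel]
        gcongr
        exact one_sub_le_exp_neg b
    _ = exp b * exp (-(3 / 4 * b)) ^ (m + 1) := by
        rw [← exp_nat_mul, ← exp_nat_mul, ← exp_add, ← exp_add]
        push_cast
        ring_nf

lemma tsum_rpow_mul_one_sub_pow_le {ρ b : ℝ} {M : ℕ} (hb0 : 0 < b) (hb1 : b ≤ 1) (hM : 1 ≤ M)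
    (hpoly : ∀ k ≥ M, (k : ℝ) ^ ρ ≤ exp (b / 4 * k)) :
    ∑' j : ℕ, ((M + j : ℕ) : ℝ) ^ ρ * (1 - b) ^ (M + j - 1) ≤ exp (3 - 3 / 4 * (b * M)) / b := by
  set r := exp (-(3 / 4 * b))
  have hr1 : r < 1 := exp_lt_one_iff.mpr (by linarith)
  have hinv : (1 - r)⁻¹ ≤ exp 2 / b := by
    refine (inv_one_sub_exp_neg_le (by positivity)).trans ?_
    rw [le_div_iff₀ hb0]
    field_simp
    linarith [add_one_le_exp 2]
  calc ∑' j : ℕ, ((M + j : ℕ) : ℝ) ^ ρ * (1 - b) ^ (M + j - 1)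
      ≤ exp b * r ^ M * (1 - r)⁻¹ := by
        refine tsum_le_of_le_geometric (fun j => by positivity) (exp_pos _).le hr1 fun j => ?_
        rw [mul_assoc, ← pow_add]
        exact rpow_mul_one_sub_pow_le (by omega) hb1 (hpoly _ (by omega))
    _ ≤ exp (1 - 3 / 4 * (b * M)) * (exp 2 / b) := by
        rw [← exp_nat_mul, ← exp_add]
        gcongr
        linarith
    _ = exp (3 - 3 / 4 * (b * M)) / b := by
        rw [mul_div_assoc', ← exp_add]
        ring_nf

/-- Tail part of the geometric-type sum decays double-exponentially: for `ρ, a, ε > 0`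
there is `N` such that for all `n ≥ N`,
`∑_{k=⌈e^{n(a+ε)}⌉}^∞ k^ρ (1 - e^{-na})^{k-1} ≤ exp(-e^{nε}/2)`. -/
theorem tail_sum_double_exponential (ρ a ε : ℝ) (hρ : 0 < ρ) (ha : 0 < a) (hε : 0 < ε) :
    ∃ N : ℕ, ∀ n : ℕ, N ≤ n →
      ∑' j : ℕ,
          ((⌈Real.exp ((n : ℝ) * (a + ε))⌉₊ + j : ℕ) : ℝ) ^ ρ *
            (1 - Real.exp (-(n : ℝ) * a)) ^ (⌈Real.exp ((n : ℝ) * (a + ε))⌉₊ + j - 1) ≤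
        Real.exp (-Real.exp ((n : ℝ) * ε) / 2) := by
  obtain ⟨N, hN⟩ := eventually_atTop.mp
    ((eventually_const_add_mul_le_exp (8 * ρ * (a + ε) / ε) 0 (half_pos hε)).and
      (eventually_const_add_mul_le_exp 12 (4 * a) hε))
  refine ⟨N, fun n hn => ?_⟩
  obtain ⟨hpoly, hE⟩ := hN n hn
  rw [zero_mul, add_zero] at hpoly
  set M := ⌈exp (n * (a + ε))⌉₊
  have hb1 : exp (-n * a) ≤ 1 := exp_le_one_iff.mpr (by rw [neg_mul, neg_nonpos]; positivity)
  have hbM : exp (n * ε) ≤ exp (-n * a) * M :=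
    calc exp (n * ε) = exp (-n * a) * exp (n * (a + ε)) := by rw [← exp_add]; ring_nf
      _ ≤ exp (-n * a) * M := by gcongr; exact Nat.le_ceil _
  calc _ ≤ exp (3 - 3 / 4 * (exp (-n * a) * M)) / exp (-n * a) :=
        tsum_rpow_mul_one_sub_pow_le (exp_pos _) hb1 (Nat.ceil_pos.mpr (exp_pos _)) fun k hk =>
          rpow_le_exp_mul_of_exp_le hρ.le ha.le hε hpoly ((Nat.le_ceil _).trans (mod_cast hk))
    _ ≤ exp (-exp (n * ε) / 2) := by
        rw [← exp_sub, exp_le_exp]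
        linarith
end

section
/- Let X be a finite alphabet and n ≥ 1. For x ∈ X^n let Ĥ_x denote the empirical entropy of x, i.e. Ĥ_x = −∑_{a∈X} P̂_x(a) log₂ P̂_x(a), where P̂_x(a) is the fraction of positions of x equal to a (with 0 log 0 = 0). Then 1 ≤ ∑_{x∈X^n} 2^{−n Ĥ_x} ≤ (n+1)^{|X|−1}. -/
open Finset

variable {X : Type*} [Fintype X] [DecidableEq X]

/-- Number of occurrences of the symbol `a` in the string `x ∈ X^n`. -/
def occ {n : ℕ} (x : Fin n → X) (a : X) : ℕ :=
  (Finset.univ.filter fun i => x i = a).card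

/-- Empirical entropy (base 2) of the string `x ∈ X^n`, with `0 log 0 = 0`. -/
noncomputable def empEnt {n : ℕ} (x : Fin n → X) : ℝ :=
  -∑ a : X, ((occ x a : ℝ) / n) * Real.logb 2 ((occ x a : ℝ) / n)

lemma occ_sum {n : ℕ} (x : Fin n → X) : ∑ a : X, occ x a = n := by
  classical
  simp only [occ]
  have := Finset.card_eq_sum_card_fiberwise (f := x) (s := Finset.univ) (t := Finset.univ)
    (fun i _ => mem_univ _)
  simpa using this.symm

lemma rpow_ent_eq {n : ℕ} (hn : 0 < n) (x : Fin n → X) :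
    (2 : ℝ) ^ (-(n : ℝ) * empEnt x) = ∏ a : X, ((occ x a : ℝ) / n) ^ (occ x a) := by
  have hne : (n : ℝ) ≠ 0 := by positivity
  have hsum : -(n : ℝ) * empEnt x
      = ∑ a : X, (occ x a : ℝ) * Real.logb 2 ((occ x a : ℝ) / n) := by
    rw [empEnt, neg_mul_neg, Finset.mul_sum]
    refine Finset.sum_congr rfl fun a _ => ?_
    field_simp
  rw [hsum, Real.rpow_sum_of_pos (by norm_num)]
  refine Finset.prod_congr rfl fun a _ => ?_
  rcases Nat.eq_zero_or_pos (occ x a) with h | h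
  · simp [h]
  · have hp : (0 : ℝ) < (occ x a : ℝ) / n := by positivity
    rw [mul_comm, Real.rpow_mul (by norm_num), Real.rpow_logb (by norm_num) (by norm_num) hp,
      Real.rpow_natCast]

lemma prod_p_eq {n : ℕ} (x : Fin n → X) (p : X → ℝ) :
    ∏ i : Fin n, p (x i) = ∏ a : X, p a ^ (occ x a) := by
  classical
  rw [← Finset.prod_fiberwise_of_maps_to (g := x) (t := Finset.univ)
    (fun i _ => mem_univ _) (fun i => p (x i))]
  refine Finset.prod_congr rfl fun a _ => ?_
  rw [occ, Finset.prod_congr rfl (fun i hi => by rw [(mem_filter.mp hi).2]),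
    Finset.prod_const]

/-- The normalization constant of the universal guessing distribution satisfies
`1 ≤ ∑_{x ∈ X^n} 2^{-n Ĥ_x} ≤ (n+1)^{|X|-1}`. -/
theorem normalization_constant_bounds [Nonempty X] (n : ℕ) (hn : 1 ≤ n) :
    1 ≤ ∑ x : Fin n → X, (2 : ℝ) ^ (-(n : ℝ) * empEnt x) ∧
      ∑ x : Fin n → X, (2 : ℝ) ^ (-(n : ℝ) * empEnt x) ≤
        ((n : ℝ) + 1) ^ (Fintype.card X - 1) := by
  classical
  have hn0 : 0 < n := hn
  obtain ⟨a₀⟩ := ‹Nonempty X›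
  constructor
  · -- lower bound: the constant string has entropy 0
    have h1 : (2 : ℝ) ^ (-(n : ℝ) * empEnt (fun _ : Fin n => a₀)) = 1 := by
      rw [rpow_ent_eq hn0]
      refine Finset.prod_eq_one fun a _ => ?_
      rcases eq_or_ne a a₀ with rfl | ha
      · have : occ (fun _ : Fin n => a) a = n := by simp [occ]
        rw [this]
        field_simp
        exact one_pow _
      · have : occ (fun _ : Fin n => a₀) a = 0 := by simp [occ, ha.symm]
        simp [this]
    calc (1 : ℝ) = (2 : ℝ) ^ (-(n : ℝ) * empEnt (fun _ : Fin n => a₀)) := h1.symm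
      _ ≤ ∑ x : Fin n → X, (2 : ℝ) ^ (-(n : ℝ) * empEnt x) :=
        Finset.single_le_sum (f := fun x : Fin n → X => (2:ℝ) ^ (-(n:ℝ) * empEnt x))
          (fun x _ => Real.rpow_nonneg (by norm_num) _) (mem_univ _)
  · -- upper bound via the method of types
    set T : Finset (X → ℕ) := Finset.univ.image (fun x : Fin n → X => occ x) with hT
    have hgroup : ∑ x : Fin n → X, (2 : ℝ) ^ (-(n : ℝ) * empEnt x)
        = ∑ N ∈ T, ∑ x ∈ Finset.univ.filter (fun x : Fin n → X => occ x = N),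
            (2 : ℝ) ^ (-(n : ℝ) * empEnt x) := by
      rw [Finset.sum_fiberwise_of_maps_to (fun x _ => Finset.mem_image_of_mem _ (mem_univ x))]
    have hfiber : ∀ N ∈ T,
        (∑ x ∈ Finset.univ.filter (fun x : Fin n → X => occ x = N),
          (2 : ℝ) ^ (-(n : ℝ) * empEnt x)) ≤ 1 := by
      intro N hN
      set p : X → ℝ := fun a => (N a : ℝ) / n with hp
      have hfx : ∀ x ∈ Finset.univ.filter (fun x : Fin n → X => occ x = N),
          (2 : ℝ) ^ (-(n : ℝ) * empEnt x) = ∏ i : Fin n, p (x i) := by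
        intro x hx
        have hxN : occ x = N := (mem_filter.mp hx).2
        rw [rpow_ent_eq hn0, prod_p_eq x p]
        simp [hxN, hp]
      rw [Finset.sum_congr rfl hfx]
      have hNsum : ∑ a : X, N a = n := by
        obtain ⟨x, _, hx⟩ := Finset.mem_image.mp hN
        rw [← hx]; exact occ_sum x
      have hone : (∑ a : X, p a) = 1 := by
        rw [hp]
        rw [← Finset.sum_div, ← Nat.cast_sum, hNsum]
        field_simp
      calc ∑ x ∈ Finset.univ.filter (fun x : Fin n → X => occ x = N), ∏ i : Fin n, p (x i)
          ≤ ∑ x : Fin n → X, ∏ i : Fin n, p (x i) :=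
            Finset.sum_le_sum_of_subset_of_nonneg (Finset.filter_subset _ _)
              (fun x _ _ => Finset.prod_nonneg fun i _ => by positivity)
        _ = (∑ a : X, p a) ^ n := by
            rw [Finset.sum_pow' Finset.univ p n, Fintype.piFinset_univ]
        _ = 1 := by rw [hone, one_pow]
    have hcard : (T.card : ℝ) ≤ ((n : ℝ) + 1) ^ (Fintype.card X - 1) := by
      have hbound : ∀ N ∈ T, ∀ a : X, N a ≤ n := by
        intro N hN a
        obtain ⟨x, _, hx⟩ := Finset.mem_image.mp hN
        have := occ_sum x
        calc N a = occ x a := by rw [← hx]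
          _ ≤ ∑ b : X, occ x b := Finset.single_le_sum (fun b _ => Nat.zero_le _) (mem_univ a)
          _ = n := occ_sum x
      have hsumN : ∀ N ∈ T, ∑ a : X, N a = n := by
        intro N hN
        obtain ⟨x, _, hx⟩ := Finset.mem_image.mp hN
        rw [← hx]; exact occ_sum x
      -- inject T into functions {a // a ≠ a₀} → Fin (n+1)
      have hinj : Set.InjOn (fun (N : X → ℕ) (a : {a : X // a ≠ a₀}) =>
          (⟨min (N a.1) n, Nat.lt_succ_of_le (min_le_right _ _)⟩ : Fin (n+1))) T := by
        intro N hN M hM hNM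
        have hN' : N ∈ T := Finset.mem_coe.mp hN
        have hM' : M ∈ T := Finset.mem_coe.mp hM
        have hNa : ∀ a : X, a ≠ a₀ → N a = M a := by
          intro a ha
          have h1 : min (N a) n = min (M a) n := congrArg Fin.val (congrFun hNM ⟨a, ha⟩)
          rwa [min_eq_left (hbound N hN' a), min_eq_left (hbound M hM' a)] at h1
        funext a
        rcases eq_or_ne a a₀ with rfl | ha
        · have hNs := hsumN N hN'
          have hMs := hsumN M hM'
          rw [← Finset.add_sum_erase _ _ (mem_univ a)] at hNs hMs
          have : ∑ b ∈ Finset.univ.erase a, N b = ∑ b ∈ Finset.univ.erase a, M b :=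
            Finset.sum_congr rfl fun b hb => hNa b (Finset.ne_of_mem_erase hb)
          omega
        · exact hNa a ha
      have hcle : T.card ≤ (n + 1) ^ (Fintype.card X - 1) := by
        have := Finset.card_le_card_of_injOn _ (fun N _ => Finset.mem_univ _) hinj
        calc T.card ≤ (Finset.univ : Finset ({a : X // a ≠ a₀} → Fin (n+1))).card := this
          _ = (n + 1) ^ (Fintype.card X - 1) := by
            rw [Finset.card_univ, Fintype.card_fun, Fintype.card_fin]
            congr 1
            have : Fintype.card {a : X // a ≠ a₀} = Fintype.card X - 1 := by
              rw [Fintype.card_subtype_compl, Fintype.card_subtype_eq]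
            exact this
      calc (T.card : ℝ) ≤ (((n + 1) ^ (Fintype.card X - 1) : ℕ) : ℝ) := by exact_mod_cast hcle
        _ = ((n : ℝ) + 1) ^ (Fintype.card X - 1) := by push_cast; ring
    calc ∑ x : Fin n → X, (2 : ℝ) ^ (-(n : ℝ) * empEnt x)
        = ∑ N ∈ T, ∑ x ∈ Finset.univ.filter (fun x : Fin n → X => occ x = N),
            (2 : ℝ) ^ (-(n : ℝ) * empEnt x) := hgroup
      _ ≤ ∑ N ∈ T, 1 := Finset.sum_le_sum hfiber
      _ = (T.card : ℝ) := by simp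
      _ ≤ ((n : ℝ) + 1) ^ (Fintype.card X - 1) := hcard
end

section
/- Let X be a finite alphabet, n ≥ 1, and for x ∈ X^n let Ĥ_x be the empirical entropy of x. Define the universal guessing distribution P̃_n(x) = 2^{−nĤ_x} / ∑_{x'∈X^n} 2^{−nĤ_{x'}}. Then for every x ∈ X^n: (n+1)^{−(|X|−1)} · 2^{−nĤ_x} ≤ P̃_n(x) ≤ 2^{−nĤ_x}. -/
open Finset

variable {X : Type*} [Fintype X] [DecidableEq X]

/-- The universal guessing distribution `P̃_n(x) = 2^{-nĤ_x}/∑_{x'} 2^{-nĤ_{x'}}`. -/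
noncomputable def univDist {X : Type*} [Fintype X] [DecidableEq X] {n : ℕ}
    (x : Fin n → X) : ℝ :=
  (2 : ℝ) ^ (-(n : ℝ) * empEnt x) / ∑ x' : Fin n → X, (2 : ℝ) ^ (-(n : ℝ) * empEnt x')

/-!
Writing `2^{-nĤ_x} = ∏ᵢ P̂_x(xᵢ)`, the likelihood of `x` under its own empirical distribution,
the normaliser `S = ∑_{x'} 2^{-nĤ_{x'}}` is at least `1`, because a constant string has `Ĥ = 0`,
and at most the number of types: each term is bounded by `∑_N ∏ᵢ N(x'ᵢ)/n` over all types `N`,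
and for a fixed type these likelihoods sum to `1` over all strings. A type is determined by its
counts off one fixed symbol, which lie in `[0, n]`, so there are at most `(n+1)^{|X|-1}` types.
-/

theorem eq_of_sum_eq_of_forall_ne {ι M : Type*} [Fintype ι] [DecidableEq ι]
    [AddCancelCommMonoid M] {f g : ι → M} (a₀ : ι) (hsum : ∑ a, f a = ∑ a, g a)
    (h : ∀ a, a ≠ a₀ → f a = g a) : f = g := by
  funext a
  by_cases ha : a = a₀
  · subst ha
    rw [← add_sum_erase _ _ (mem_univ a), ← add_sum_erase _ _ (mem_univ a),
      sum_congr rfl fun b hb => h b (ne_of_mem_erase hb)] at hsum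
    exact add_right_cancel hsum
  · exact h a ha

omit [Fintype X] in
theorem occ_le {n : ℕ} (x : Fin n → X) (a : X) : occ x a ≤ n :=
  (card_filter_le _ _).trans_eq (card_fin n)

theorem sum_occ {n : ℕ} (x : Fin n → X) : ∑ a, occ x a = n :=
  (card_eq_sum_card_fiberwise (s := univ) fun i _ => mem_univ (x i)).symm.trans (card_fin n)

theorem prod_apply_eq_prod_pow_occ {M : Type*} [CommMonoid M] {n : ℕ} (x : Fin n → X)
    (f : X → M) : ∏ i, f (x i) = ∏ a, f a ^ occ x a := by
  simp only [occ, ← prod_const]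
  exact (prod_fiberwise' _ x f).symm

theorem two_rpow_neg_mul_empEnt {n : ℕ} (x : Fin n → X) :
    (2 : ℝ) ^ (-(n : ℝ) * empEnt x) = ∏ i, (occ x (x i) : ℝ) / n := by
  have hlog :
      -(n : ℝ) * empEnt x = ∑ a, (occ x a : ℝ) * Real.logb 2 ((occ x a : ℝ) / n) := by
    rw [empEnt, neg_mul_neg, mul_sum]
    refine sum_congr rfl fun a _ => ?_
    rcases (occ x a).eq_zero_or_pos with h | h
    · simp [h]
    · have : (n : ℝ) ≠ 0 := Nat.cast_ne_zero.2 (h.trans_le (occ_le x a)).ne'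
      field_simp
  rw [hlog, Real.rpow_sum_of_pos two_pos,
    prod_apply_eq_prod_pow_occ x fun a => (occ x a : ℝ) / n]
  refine prod_congr rfl fun a _ => ?_
  rcases (occ x a).eq_zero_or_pos with h | h
  · simp [h]
  · have : (0 : ℝ) < n := Nat.cast_pos.2 (h.trans_le (occ_le x a))
    rw [mul_comm, Real.rpow_mul zero_le_two,
      Real.rpow_logb two_pos (by norm_num) (by positivity), Real.rpow_natCast]

theorem one_le_sum_two_rpow [Nonempty X] (n : ℕ) :
    1 ≤ ∑ x : Fin n → X, (2 : ℝ) ^ (-(n : ℝ) * empEnt x) := by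
  obtain ⟨a₀⟩ := ‹Nonempty X›
  have hconst : (2 : ℝ) ^ (-(n : ℝ) * empEnt fun _ : Fin n => a₀) = 1 := by
    rw [two_rpow_neg_mul_empEnt]
    simp [occ]
  calc 1 = (2 : ℝ) ^ (-(n : ℝ) * empEnt fun _ : Fin n => a₀) := hconst.symm
    _ ≤ _ := single_le_sum (f := fun x : Fin n → X => (2 : ℝ) ^ (-(n : ℝ) * empEnt x))
      (fun x _ => (Real.rpow_pos_of_pos two_pos _).le) (mem_univ _)

variable (X) in
def types (n : ℕ) : Finset (X → ℕ) :=
  univ.image fun x : Fin n → X => occ x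

theorem card_types_le [Nonempty X] (n : ℕ) :
    #(types X n) ≤ (n + 1) ^ (Fintype.card X - 1) := by
  obtain ⟨a₀⟩ := ‹Nonempty X›
  let restrict : (X → ℕ) → ({a // a ≠ a₀} → ℕ) := fun N a => N a
  have hinj : Set.InjOn restrict (types X n) := by
    simp only [types, Set.InjOn, coe_image, coe_univ, Set.image_univ, Set.mem_range]
    rintro _ ⟨x, rfl⟩ _ ⟨y, rfl⟩ hxy
    exact eq_of_sum_eq_of_forall_ne a₀ (by rw [sum_occ, sum_occ])
      fun a ha => congrFun hxy ⟨a, ha⟩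
  calc #(types X n) = #((types X n).image restrict) := (card_image_of_injOn hinj).symm
    _ ≤ #(Fintype.piFinset fun _ : {a // a ≠ a₀} => range (n + 1)) := by
      refine card_le_card fun N hN => ?_
      simp only [types, mem_image, mem_univ, true_and] at hN
      obtain ⟨_, ⟨x, rfl⟩, rfl⟩ := hN
      simpa [restrict, Nat.lt_succ_iff] using fun a _ => occ_le x a
    _ = (n + 1) ^ (Fintype.card X - 1) := by simp

theorem sum_prod_occ_div_eq_one {n : ℕ} (y : Fin n → X) :
    ∑ x : Fin n → X, ∏ i, (occ y (x i) : ℝ) / n = 1 := by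
  rw [← Fintype.sum_pow fun a => (occ y a : ℝ) / n, ← sum_div, ← Nat.cast_sum, sum_occ]
  rcases n.eq_zero_or_pos with rfl | hn
  · simp
  · rw [div_self (Nat.cast_ne_zero.2 hn.ne'), one_pow]

theorem sum_two_rpow_le [Nonempty X] (n : ℕ) :
    ∑ x : Fin n → X, (2 : ℝ) ^ (-(n : ℝ) * empEnt x) ≤
      ((n : ℝ) + 1) ^ ((Fintype.card X : ℝ) - 1) := by
  calc ∑ x : Fin n → X, (2 : ℝ) ^ (-(n : ℝ) * empEnt x)
      = ∑ x : Fin n → X, ∏ i, (occ x (x i) : ℝ) / n := by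
        simp only [two_rpow_neg_mul_empEnt]
    _ ≤ ∑ x : Fin n → X, ∑ N ∈ types X n, ∏ i, (N (x i) : ℝ) / n :=
      sum_le_sum fun x _ => single_le_sum (f := fun N : X → ℕ => ∏ i, (N (x i) : ℝ) / n)
        (fun _ _ => by positivity) (mem_image_of_mem _ (mem_univ x))
    _ = ∑ N ∈ types X n, ∑ x : Fin n → X, ∏ i, (N (x i) : ℝ) / n := sum_comm
    _ = #(types X n) := by
      rw [sum_congr rfl fun N hN => ?_, sum_const, nsmul_one]
      obtain ⟨y, -, rfl⟩ := mem_image.1 hN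
      exact sum_prod_occ_div_eq_one y
    _ ≤ ((n + 1) ^ (Fintype.card X - 1) : ℕ) := by exact_mod_cast card_types_le n
    _ = ((n : ℝ) + 1) ^ ((Fintype.card X : ℝ) - 1) := by
      rw [← Nat.cast_one (R := ℝ), ← Nat.cast_sub Fintype.card_pos, Real.rpow_natCast]
      push_cast; rfl

theorem univDist_bounds_general [Nonempty X] (n : ℕ) (x : Fin n → X) :
    ((n : ℝ) + 1) ^ (-((Fintype.card X : ℝ) - 1)) * (2 : ℝ) ^ (-(n : ℝ) * empEnt x) ≤
        univDist x ∧
      univDist x ≤ (2 : ℝ) ^ (-(n : ℝ) * empEnt x) := by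
  have hpos : 0 < (2 : ℝ) ^ (-(n : ℝ) * empEnt x) := Real.rpow_pos_of_pos two_pos _
  have hS := one_le_sum_two_rpow (X := X) n
  refine ⟨?_, div_le_self hpos.le hS⟩
  rw [Real.rpow_neg (by positivity), inv_mul_eq_div]
  exact div_le_div_of_nonneg_left hpos.le (zero_lt_one.trans_le hS) (sum_two_rpow_le n)

/-- The universal guessing distribution is exponentially equivalent to `2^{-nĤ_x}`:
`(n+1)^{-(|X|-1)} 2^{-nĤ_x} ≤ P̃_n(x) ≤ 2^{-nĤ_x}`. -/
theorem univDist_bounds [Nonempty X] (n : ℕ) (hn : 1 ≤ n) (x : Fin n → X) :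
    ((n : ℝ) + 1) ^ (-((Fintype.card X : ℝ) - 1)) * (2 : ℝ) ^ (-(n : ℝ) * empEnt x) ≤
        univDist x ∧
      univDist x ≤ (2 : ℝ) ^ (-(n : ℝ) * empEnt x) :=
  univDist_bounds_general n x
end

section
/- Let X be a finite alphabet, let P be a probability distribution on X with P(a) > 0 for all a ∈ X, and let ρ > 0. Then max_Q [ρ H(Q) − D(Q‖P)] = (1+ρ) log₂ ∑_{a∈X} P(a)^{1/(1+ρ)}, where the maximum is over all probability distributions Q on X, H(Q) = −∑_a Q(a) log₂ Q(a), and D(Q‖P) = ∑_a Q(a) log₂(Q(a)/P(a)). Equivalently, the optimal guessing exponent E(ρ) = max_Q[ρH(Q) − D(Q‖P)] equals ρ times the Rényi entropy of P of order 1/(1+ρ). -/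
/-!
Writing `r a = P a ^ (1/(1+ρ))`, the objective `ρ H(Q) − D(Q‖P)` equals
`(1+ρ) ∑ Q a log₂ (r a / Q a)`. By the inequality `log x ≤ x − 1` this is at most `(1+ρ) log₂ ∑ r a`
(Gibbs' inequality), with equality for the tilted distribution `Q = r / ∑ r`.
-/

open Finset Real

lemma mul_log_div_le_sub {q s : ℝ} (hq : 0 ≤ q) (hs : 0 < s) : q * log (s / q) ≤ s - q := by
  rcases hq.eq_or_lt with rfl | hq
  · simpa using hs.le
  · calc q * log (s / q) ≤ q * (s / q - 1) :=
          mul_le_mul_of_nonneg_left (log_le_sub_one_of_pos (div_pos hs hq)) hq.le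
      _ = s - q := by field_simp

section Gibbs

variable {X : Type*} [Fintype X] {Q r : X → ℝ}

lemma sum_mul_log_div_le_log_sum (hQ : ∀ a, 0 ≤ Q a) (hQsum : ∑ a, Q a = 1) (hr : ∀ a, 0 < r a) :
    ∑ a, Q a * log (r a / Q a) ≤ log (∑ a, r a) := by
  set Z := ∑ a, r a
  obtain ⟨a₀, -, -⟩ := exists_ne_zero_of_sum_ne_zero (hQsum.trans_ne one_ne_zero)
  have hZ : 0 < Z := sum_pos (fun a _ => hr a) ⟨a₀, mem_univ a₀⟩
  have hsplit : ∀ a, Q a * log (r a / Q a) = Q a * log (r a / Z / Q a) + Q a * log Z := by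
    intro a
    rcases (hQ a).eq_or_lt with h | h
    · simp [← h]
    · rw [← mul_add, ← log_mul (div_pos (div_pos (hr a) hZ) h).ne' hZ.ne']
      congr 2
      field_simp
  calc ∑ a, Q a * log (r a / Q a)
      = ∑ a, Q a * log (r a / Z / Q a) + log Z := by
        rw [sum_congr rfl fun a _ => hsplit a, sum_add_distrib, ← sum_mul, hQsum, one_mul]
    _ ≤ ∑ a, (r a / Z - Q a) + log Z := by
        gcongr with a
        exact mul_log_div_le_sub (hQ a) (div_pos (hr a) hZ)
    _ = log Z := by
        rw [sum_sub_distrib, ← sum_div, div_self hZ.ne', hQsum, sub_self, zero_add]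

lemma sum_mul_logb_div_le_logb_sum {b : ℝ} (hb : 1 < b) (hQ : ∀ a, 0 ≤ Q a)
    (hQsum : ∑ a, Q a = 1) (hr : ∀ a, 0 < r a) :
    ∑ a, Q a * logb b (r a / Q a) ≤ logb b (∑ a, r a) := by
  simp only [← log_div_log, mul_div_assoc', ← sum_div]
  exact div_le_div_of_nonneg_right (sum_mul_log_div_le_log_sum hQ hQsum hr) (log_pos hb).le

lemma isGreatest_sum_mul_logb_div [Nonempty X] {b : ℝ} (hb : 1 < b) (hr : ∀ a, 0 < r a) :
    IsGreatest {e : ℝ | ∃ Q : X → ℝ, (∀ a, 0 ≤ Q a) ∧ ∑ a, Q a = 1 ∧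
        e = ∑ a, Q a * logb b (r a / Q a)}
      (logb b (∑ a, r a)) := by
  have hZ : 0 < ∑ a, r a := sum_pos (fun a _ => hr a) univ_nonempty
  refine ⟨⟨fun a => r a / ∑ a, r a, fun a => (div_pos (hr a) hZ).le, ?_, ?_⟩, ?_⟩
  · rw [← sum_div, div_self hZ.ne']
  · simp only [div_div_cancel₀ (hr _).ne', ← sum_mul, ← sum_div, div_self hZ.ne', one_mul]
  · rintro e ⟨Q, hQ, hQsum, rfl⟩
    exact sum_mul_logb_div_le_logb_sum hb hQ hQsum hr

end Gibbs

lemma rho_mul_entropy_sub_divergence_eq {X : Type*} [Fintype X] {P Q : X → ℝ}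
    (hP : ∀ a, 0 < P a) (hQ : ∀ a, 0 ≤ Q a) {ρ b : ℝ} (hρ : 1 + ρ ≠ 0) :
    ρ * (-∑ a, Q a * logb b (Q a)) - ∑ a, Q a * logb b (Q a / P a) =
      (1 + ρ) * ∑ a, Q a * logb b (P a ^ (1 / (1 + ρ)) / Q a) := by
  have hterm : ∀ a, -(ρ * (Q a * logb b (Q a))) - Q a * logb b (Q a / P a) =
      (1 + ρ) * (Q a * logb b (P a ^ (1 / (1 + ρ)) / Q a)) := by
    intro a
    rcases (hQ a).eq_or_lt with h | h
    · simp [← h]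
    · rw [logb_div h.ne' (hP a).ne', logb_div (rpow_pos_of_pos (hP a) _).ne' h.ne',
        logb_rpow_eq_mul_logb_of_pos (hP a)]
      field_simp
      ring
  rw [mul_sum, mul_neg, mul_sum, ← sum_neg_distrib, ← sum_sub_distrib]
  exact sum_congr rfl fun a _ => hterm a

/-- Identity (3) of the paper: `max_Q [ρ H(Q) − D(Q‖P)] = (1+ρ) log₂ ∑_a P(a)^{1/(1+ρ)}`,
i.e. the optimal guessing exponent equals `ρ` times the Rényi entropy of order `1/(1+ρ)`. -/
theorem guessing_exponent_eq_renyi {X : Type*} [Fintype X]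
    (P : X → ℝ) (hP : ∀ a, 0 < P a) (hPsum : ∑ a : X, P a = 1) (ρ : ℝ) (hρ : 0 < ρ) :
    IsGreatest
      {e : ℝ | ∃ Q : X → ℝ, (∀ a, 0 ≤ Q a) ∧ (∑ a : X, Q a) = 1 ∧
        e = ρ * (-∑ a : X, Q a * Real.logb 2 (Q a)) -
              ∑ a : X, Q a * Real.logb 2 (Q a / P a)}
      ((1 + ρ) * Real.logb 2 (∑ a : X, P a ^ (1 / (1 + ρ)))) := by
  obtain ⟨a₀, -, -⟩ := exists_ne_zero_of_sum_ne_zero (hPsum.trans_ne one_ne_zero)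
  have : Nonempty X := ⟨a₀⟩
  have h1ρ : 0 < 1 + ρ := by linarith
  obtain ⟨⟨Q₀, hQ₀, hQ₀sum, hQ₀max⟩, hbound⟩ :=
    isGreatest_sum_mul_logb_div one_lt_two fun a => rpow_pos_of_pos (hP a) (1 / (1 + ρ))
  refine ⟨⟨Q₀, hQ₀, hQ₀sum, ?_⟩, ?_⟩
  · rw [rho_mul_entropy_sub_divergence_eq hP hQ₀ h1ρ.ne', hQ₀max]
  · rintro e ⟨Q, hQ, hQsum, rfl⟩
    rw [rho_mul_entropy_sub_divergence_eq hP hQ h1ρ.ne']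
    exact mul_le_mul_of_nonneg_left (hbound ⟨Q, hQ, hQsum, rfl⟩) h1ρ.le
end

section
/- Let S be a nonempty finite set, let P be a probability distribution on S, and suppose S is partitioned into cells such that P is constant on each cell; for x ∈ S let T(x) denote the cell containing x. Then for every ρ > 0 and every injective function G : S → {1, …, |S|}: ∑_{x∈S} P(x) G(x)^ρ ≥ (1/(1+ρ)) ∑_{x∈S} P(x) |T(x)|^ρ. -/
/-!
On a cell `C` the probability is a constant `p`, so `C` contributes `p * ∑_{y ∈ C} G(y)^ρ`.
Since `G` is injective into the positive integers, its values on `C`, listed in increasing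
order, dominate `1, …, |C|`, and `∑_{k=1}^{|C|} k^ρ ≥ ∫_0^{|C|} x^ρ dx = |C|^(1+ρ)/(1+ρ)`.
Spreading the contribution of each cell evenly over its `|C|` points turns this into the
pointwise bound `P(x) |T(x)|^ρ / (1+ρ)`.
-/

open Finset

theorem Finset.sum_range_succ_le_sum_of_monotone {M : Type*} [AddCommMonoid M] [PartialOrder M]
    [IsOrderedAddMonoid M] {f : ℕ → M} (hf : Monotone f) {A : Finset ℕ} (hA : 0 ∉ A) :
    ∑ i ∈ range #A, f (i + 1) ≤ ∑ a ∈ A, f a := by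
  induction A using Finset.induction_on_max with
  | empty => simp
  | insert a s hlt ih =>
    have has : a ∉ s := fun h => (hlt a h).false
    have hs : s ⊆ Ico 1 a := fun x hx =>
      mem_Ico.2 ⟨Nat.pos_of_ne_zero fun h => hA (h ▸ mem_insert_of_mem hx), hlt x hx⟩
    have ha : a ≠ 0 := fun h => hA (h ▸ mem_insert_self a s)
    have hcard : #s + 1 ≤ a := by
      have := card_le_card hs
      rw [Nat.card_Ico] at this
      omega
    rw [card_insert_of_notMem has, sum_range_succ, sum_insert has, add_comm (f a)]
    exact add_le_add (ih fun h => hA (mem_insert_of_mem h)) (hf hcard)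

theorem card_rpow_div_le_sum_rpow {ρ : ℝ} (hρ : 0 ≤ ρ) {A : Finset ℕ} (hA : 0 ∉ A) :
    (#A : ℝ) ^ (ρ + 1) / (ρ + 1) ≤ ∑ a ∈ A, (a : ℝ) ^ ρ := by
  have hmono : MonotoneOn (fun x : ℝ => x ^ ρ) (Set.Icc 0 (0 + #A)) := fun x hx y _ hxy =>
    Real.rpow_le_rpow hx.1 hxy hρ
  calc (#A : ℝ) ^ (ρ + 1) / (ρ + 1) = ∫ x in (0 : ℝ)..0 + #A, x ^ ρ := by
        rw [integral_rpow (Or.inl (by linarith)), zero_add,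
          Real.zero_rpow (by linarith), sub_zero]
    _ ≤ ∑ i ∈ range #A, ((i + 1 : ℕ) : ℝ) ^ ρ := by simpa using hmono.integral_le_sum
    _ ≤ ∑ a ∈ A, (a : ℝ) ^ ρ :=
        sum_range_succ_le_sum_of_monotone (f := fun n : ℕ => (n : ℝ) ^ ρ)
          (fun m n h => Real.rpow_le_rpow (Nat.cast_nonneg m) (Nat.cast_le.2 h) hρ) hA

theorem Finset.sum_eq_sum_sum_div_card {ι R : Type*} [Fintype ι] [Semifield R] [CharZero R]
    (T : ι → Finset ι) (hmem : ∀ x, x ∈ T x) (hpart : ∀ x y, y ∈ T x → T y = T x) (f : ι → R) :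
    ∑ x, f x = ∑ x, (∑ y ∈ T x, f y) / #(T x) := by
  have hsymm : ∀ x y, y ∈ T x ↔ x ∈ T y := fun x y =>
    ⟨fun h => hpart x y h ▸ hmem x, fun h => hpart y x h ▸ hmem y⟩
  calc ∑ x, f x = ∑ y, ∑ x ∈ T y, f y / #(T y) := by
        refine sum_congr rfl fun y _ => ?_
        rw [sum_const, nsmul_eq_mul, mul_div_cancel₀]
        exact Nat.cast_ne_zero.2 (card_ne_zero_of_mem (hmem y))
    _ = ∑ x, ∑ y ∈ T x, f y / #(T y) :=
        (sum_comm' fun x y => by simp only [mem_univ, true_and, and_true, hsymm]).symm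
    _ = ∑ x, (∑ y ∈ T x, f y) / #(T x) := by
        refine sum_congr rfl fun x _ => ?_
        rw [sum_div]
        exact sum_congr rfl fun y hy => by rw [hpart x y hy]

theorem converse_partition_bound_general {S : Type*} [Fintype S]
    (P : S → ℝ) (hP0 : ∀ x, 0 ≤ P x)
    (T : S → Finset S) (hmem : ∀ x, x ∈ T x) (hpart : ∀ x y, y ∈ T x → T y = T x)
    (hconst : ∀ x y, y ∈ T x → P y = P x)
    (ρ : ℝ) (hρ : 0 < ρ)
    (G : S → ℕ) (hGinj : Function.Injective G)
    (hG : ∀ x, G x ∈ Finset.Icc 1 (Fintype.card S)) :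
    (1 / (1 + ρ)) * ∑ x : S, P x * ((T x).card : ℝ) ^ ρ ≤
      ∑ x : S, P x * (G x : ℝ) ^ ρ := by
  have hcell (x : S) : (#(T x) : ℝ) ^ (ρ + 1) / (ρ + 1) ≤ ∑ y ∈ T x, (G y : ℝ) ^ ρ := by
    have h0 : 0 ∉ (T x).image G := by
      simpa [eq_comm] using fun y _ => Nat.one_le_iff_ne_zero.1 (mem_Icc.1 (hG y)).1
    simpa [card_image_of_injective _ hGinj, sum_image fun _ _ _ _ h => hGinj h]
      using card_rpow_div_le_sum_rpow hρ.le h0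
  calc (1 / (1 + ρ)) * ∑ x, P x * (#(T x) : ℝ) ^ ρ
      = ∑ x, P x * ((#(T x) : ℝ) ^ (ρ + 1) / (ρ + 1)) / #(T x) := by
        rw [mul_sum]
        refine sum_congr rfl fun x _ => ?_
        have hcard : (#(T x) : ℝ) ≠ 0 := Nat.cast_ne_zero.2 (card_ne_zero_of_mem (hmem x))
        rw [Real.rpow_add_one hcard]
        field_simp
        ring
    _ ≤ ∑ x, P x * (∑ y ∈ T x, (G y : ℝ) ^ ρ) / #(T x) := by
        gcongr with x
        exacts [hP0 x, hcell x]
    _ = ∑ x, (∑ y ∈ T x, P y * (G y : ℝ) ^ ρ) / #(T x) := by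
        refine sum_congr rfl fun x _ => ?_
        rw [mul_sum]
        exact congrArg (· / _) (sum_congr rfl fun y hy => by rw [hconst x y hy])
    _ = ∑ x, P x * (G x : ℝ) ^ ρ := (sum_eq_sum_sum_div_card T hmem hpart _).symm

/-- Abstract core of the converse theorem (Theorem 2): if `P` is constant on each cell
`T x` of a partition of the finite set `S`, then for every `ρ > 0` and every injective
guessing function `G : S → {1, …, |S|}`,
`∑_x P(x) G(x)^ρ ≥ (1/(1+ρ)) ∑_x P(x) |T(x)|^ρ`. -/
theorem converse_partition_bound {S : Type*} [Fintype S] [DecidableEq S] [Nonempty S]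
    (P : S → ℝ) (hP0 : ∀ x, 0 ≤ P x) (hP1 : ∑ x : S, P x = 1)
    (T : S → Finset S) (hmem : ∀ x, x ∈ T x) (hpart : ∀ x y, y ∈ T x → T y = T x)
    (hconst : ∀ x y, y ∈ T x → P y = P x)
    (ρ : ℝ) (hρ : 0 < ρ)
    (G : S → ℕ) (hGinj : Function.Injective G)
    (hG : ∀ x, G x ∈ Finset.Icc 1 (Fintype.card S)) :
    (1 / (1 + ρ)) * ∑ x : S, P x * ((T x).card : ℝ) ^ ρ ≤
      ∑ x : S, P x * (G x : ℝ) ^ ρ :=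
  converse_partition_bound_general P hP0 T hmem hpart hconst ρ hρ G hGinj hG
end

section
/- Let S be a nonempty finite set, let L : S → ℕ satisfy the Kraft inequality ∑_{x∈S} 2^{−L(x)} ≤ 1, and let G : S → {1, …, |S|} be any bijection that orders S by non-decreasing values of L (i.e., L(x) < L(x') implies G(x) < G(x')). Then for every probability distribution P on S and every ρ > 0: ∑_{x∈S} P(x) G(x)^ρ ≤ 2^ρ ∑_{x∈S} P(x) 2^{ρ L(x)}. -/
/-!
Since `G` ranks `S` bijectively by non-decreasing code length, the first `G x` guesses are
all elements whose code is no longer than that of `x`, so `G x ≤ #{x' | L x' ≤ L x}`; by the Kraft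
inequality each of these carries weight `2 ^ (-L x') ≥ 2 ^ (-L x)`, so there are at most
`2 ^ L x` of them. Raising `G x ≤ 2 ^ L x` to the power `ρ` and averaging gives the bound, with
the factor `2 ^ ρ` to spare.
-/

open Finset

section Guessing

variable {S : Type*} [Fintype S]

theorem card_filter_le_le_two_pow_of_kraft (L : S → ℕ)
    (hKraft : ∑ x : S, (1 : ℝ) / 2 ^ L x ≤ 1) (k : ℕ) :
    (#{x | L x ≤ k} : ℝ) ≤ 2 ^ k := by
  have hweight : (#{x | L x ≤ k} : ℝ) * (1 / 2 ^ k) ≤ 1 :=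
    calc (#{x | L x ≤ k} : ℝ) * (1 / 2 ^ k) = ∑ _x ∈ {x | L x ≤ k}, (1 : ℝ) / 2 ^ k := by
          rw [sum_const, nsmul_eq_mul]
      _ ≤ ∑ x ∈ {x | L x ≤ k}, (1 : ℝ) / 2 ^ L x :=
          sum_le_sum fun x hx => one_div_pow_le_one_div_pow_of_le one_le_two (mem_filter.mp hx).2
      _ ≤ ∑ x : S, (1 : ℝ) / 2 ^ L x :=
          sum_le_sum_of_subset_of_nonneg (subset_univ _) fun _ _ _ => by positivity
      _ ≤ 1 := hKraft
  rwa [mul_one_div, div_le_one (by positivity)] at hweight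

theorem le_card_filter_le_of_injective_of_mem_Icc (G : S → ℕ) (hGinj : Function.Injective G)
    (hGrange : ∀ x, G x ∈ Icc 1 (Fintype.card S)) (x : S) :
    G x ≤ #{x' | G x' ≤ G x} := by
  have hImage : univ.image G = Icc 1 (Fintype.card S) :=
    eq_of_subset_of_card_le
      (fun _ hy => by obtain ⟨x', -, rfl⟩ := mem_image.mp hy; exact hGrange x')
      (by rw [card_image_of_injective _ hGinj, Nat.card_Icc, card_univ, Nat.add_sub_cancel])
  have hIcc : Icc 1 (G x) ⊆ image G {x' | G x' ≤ G x} := by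
    intro y hy
    have hy' : y ∈ univ.image G := hImage ▸ Icc_subset_Icc_right (mem_Icc.mp (hGrange x)).2 hy
    obtain ⟨x', -, rfl⟩ := mem_image.mp hy'
    exact mem_image_of_mem G (mem_filter.mpr ⟨mem_univ _, (mem_Icc.mp hy).2⟩)
  simpa using (card_le_card hIcc).trans card_image_le

theorem filter_le_subset_filter_le_of_lt_imp_lt (L G : S → ℕ)
    (hGmono : ∀ x x', L x < L x' → G x < G x') (x : S) :
    ({x' | G x' ≤ G x} : Finset S) ⊆ ({x' | L x' ≤ L x} : Finset S) := by
  intro x' hx'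
  simp only [mem_filter, mem_univ, true_and] at hx' ⊢
  exact le_of_not_gt fun hlt => (hGmono x x' hlt).not_ge hx'

end Guessing

theorem deterministic_guessing_moment_bound_general {S : Type*} [Fintype S]
    (L : S → ℕ) (hKraft : ∑ x : S, (1 : ℝ) / 2 ^ L x ≤ 1)
    (G : S → ℕ) (hGinj : Function.Injective G)
    (hGrange : ∀ x, G x ∈ Finset.Icc 1 (Fintype.card S))
    (hGmono : ∀ x x', L x < L x' → G x < G x')
    (P : S → ℝ) (hP0 : ∀ x, 0 ≤ P x)
    (ρ : ℝ) (hρ : 0 < ρ) :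
    ∑ x : S, P x * (G x : ℝ) ^ ρ ≤
      (2 : ℝ) ^ ρ * ∑ x : S, P x * (2 : ℝ) ^ (ρ * (L x : ℝ)) := by
  have hGuess (x : S) : (G x : ℝ) ≤ 2 ^ L x :=
    calc (G x : ℝ) ≤ #{x' | G x' ≤ G x} := by
          exact_mod_cast le_card_filter_le_of_injective_of_mem_Icc G hGinj hGrange x
      _ ≤ #{x' | L x' ≤ L x} := by
          exact_mod_cast card_le_card (filter_le_subset_filter_le_of_lt_imp_lt L G hGmono x)
      _ ≤ 2 ^ L x := card_filter_le_le_two_pow_of_kraft L hKraft (L x)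
  have hMoment : ∑ x : S, P x * (G x : ℝ) ^ ρ ≤ ∑ x : S, P x * (2 : ℝ) ^ (ρ * (L x : ℝ)) := by
    refine sum_le_sum fun x _ => mul_le_mul_of_nonneg_left ?_ (hP0 x)
    rw [mul_comm, Real.rpow_natCast_mul zero_le_two]
    exact Real.rpow_le_rpow (Nat.cast_nonneg _) (hGuess x) hρ.le
  exact hMoment.trans <| le_mul_of_one_le_left
    (sum_nonneg fun x _ => mul_nonneg (hP0 x) (by positivity)) (Real.one_le_rpow one_le_two hρ.le)

/-- Deterministic guessing by non-decreasing code length (Theorem 3, deterministic part):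
if `L` satisfies the Kraft inequality and the bijection `G : S → {1, …, |S|}` orders `S`
by non-decreasing `L`, then `∑_x P(x) G(x)^ρ ≤ 2^ρ ∑_x P(x) 2^{ρ L(x)}`. -/
theorem deterministic_guessing_moment_bound {S : Type*} [Fintype S] [Nonempty S]
    (L : S → ℕ) (hKraft : ∑ x : S, (1 : ℝ) / 2 ^ L x ≤ 1)
    (G : S → ℕ) (hGinj : Function.Injective G)
    (hGrange : ∀ x, G x ∈ Finset.Icc 1 (Fintype.card S))
    (hGmono : ∀ x x', L x < L x' → G x < G x')
    (P : S → ℝ) (hP0 : ∀ x, 0 ≤ P x) (hP1 : ∑ x : S, P x = 1)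
    (ρ : ℝ) (hρ : 0 < ρ) :
    ∑ x : S, P x * (G x : ℝ) ^ ρ ≤
      (2 : ℝ) ^ ρ * ∑ x : S, P x * (2 : ℝ) ^ (ρ * (L x : ℝ)) :=
  deterministic_guessing_moment_bound_general L hKraft G hGinj hGrange hGmono P hP0 ρ hρ
end

section
/- Let S be a nonempty finite set and let L : S → ℕ satisfy the Kraft inequality ∑_{x∈S} 2^{−L(x)} ≤ 1; define the randomized guessing distribution P̃(x) = 2^{−L(x)} / ∑_{x'∈S} 2^{−L(x')}. Then (a) P̃(x) ≥ 2^{−L(x)} for every x ∈ S; and (b) for every ρ > 0, A > 0 and ε > 0 there exists N ∈ ℕ such that for every n ≥ N, every such pair (S, L) with max_{x∈S} L(x) ≤ An, and every x ∈ S: P̃(x) ∑_{k=1}^∞ k^ρ (1 − P̃(x))^{k−1} ≤ 2^{ρ L(x) + nε}. -/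
open Real

/-- Pointwise bound: `(k+1)^ρ (1-p)^k ≤ 3 (2ρ/p)^ρ (√(1-p))^k`. -/
lemma geom_pointwise_bound {ρ p : ℝ} (hρ : 0 < ρ) (hp0 : 0 < p) (hp1 : p ≤ 1) (k : ℕ) :
    ((k : ℝ) + 1) ^ ρ * (1 - p) ^ k ≤ 3 * (2 * ρ / p) ^ ρ * (Real.sqrt (1 - p)) ^ k := by
  set q : ℝ := 1 - p with hq
  have hq0 : 0 ≤ q := by simp [hq]; linarith
  set r : ℝ := Real.sqrt q with hrdef
  have hr0 : 0 ≤ r := Real.sqrt_nonneg q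
  have hrr : r * r = q := Real.mul_self_sqrt hq0
  have hqk : q ^ k = r ^ k * r ^ k := by rw [← mul_pow, hrr]
  -- main one-factor bound
  have key : ((k : ℝ) + 1) ^ ρ * r ^ k ≤ 3 * (2 * ρ / p) ^ ρ := by
    -- r ≤ exp(-(p/2))
    have hqexp : q ≤ Real.exp (-p) := by
      have := Real.add_one_le_exp (-p)
      linarith
    have hrle : r ≤ Real.exp (-(p / 2)) := by
      have h2 : Real.exp (-p) = Real.exp (-(p / 2)) ^ 2 := by
        rw [sq, ← Real.exp_add]; ring_nf
      have := Real.sqrt_le_sqrt hqexp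
      rwa [h2, Real.sqrt_sq (Real.exp_nonneg _)] at this
    have hrk : r ^ k ≤ Real.exp (-(p / 2) * k) := by
      calc r ^ k ≤ Real.exp (-(p / 2)) ^ k := pow_le_pow_left₀ hr0 hrle k
        _ = Real.exp (-(p / 2) * k) := by
            rw [← Real.exp_nat_mul]; ring_nf
    -- (k+1)^ρ bound
    set x : ℝ := p * ((k : ℝ) + 1) / (2 * ρ) with hxdef
    have hx : 0 < x := by positivity
    have hk1 : ((k : ℝ) + 1) ^ ρ ≤ (2 * ρ / p) ^ ρ * Real.exp (p * ((k : ℝ) + 1) / 2 - ρ) := by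
      have hsplit : ((k : ℝ) + 1) = (2 * ρ / p) * x := by
        rw [hxdef]; field_simp <;> ring
      have hsplit2 : ((k : ℝ) + 1) ^ ρ = (2 * ρ / p) ^ ρ * x ^ ρ := by
        rw [show ((k : ℝ) + 1) ^ ρ = ((2 * ρ / p) * x) ^ ρ by rw [← hsplit],
          Real.mul_rpow (by positivity) hx.le]
      rw [hsplit2]
      have hxρ : x ^ ρ ≤ Real.exp (p * ((k : ℝ) + 1) / 2 - ρ) := by
        rw [Real.rpow_def_of_pos hx]
        apply Real.exp_le_exp.mpr
        have hlog := Real.log_le_sub_one_of_pos hx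
        have h1 : Real.log x * ρ ≤ (x - 1) * ρ :=
          mul_le_mul_of_nonneg_right hlog hρ.le
        have h2 : (x - 1) * ρ = p * ((k : ℝ) + 1) / 2 - ρ := by
          rw [hxdef]; field_simp <;> ring
        linarith
      exact mul_le_mul_of_nonneg_left hxρ (by positivity)
    calc ((k : ℝ) + 1) ^ ρ * r ^ k
        ≤ ((2 * ρ / p) ^ ρ * Real.exp (p * ((k : ℝ) + 1) / 2 - ρ)) * Real.exp (-(p / 2) * k) := by
          apply mul_le_mul hk1 hrk (by positivity) (by positivity)
      _ = (2 * ρ / p) ^ ρ * Real.exp (p / 2 - ρ) := by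
          rw [mul_assoc, ← Real.exp_add]; ring_nf
      _ ≤ (2 * ρ / p) ^ ρ * 3 := by
          apply mul_le_mul_of_nonneg_left _ (by positivity)
          have h1 : p / 2 - ρ ≤ 1 := by linarith
          calc Real.exp (p / 2 - ρ) ≤ Real.exp 1 := Real.exp_le_exp.mpr h1
            _ ≤ 3 := by have := Real.exp_one_lt_d9; linarith
      _ = 3 * (2 * ρ / p) ^ ρ := by ring
  calc ((k : ℝ) + 1) ^ ρ * q ^ k = (((k : ℝ) + 1) ^ ρ * r ^ k) * r ^ k := by
        rw [hqk]; ring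
    _ ≤ (3 * (2 * ρ / p) ^ ρ) * r ^ k :=
        mul_le_mul_of_nonneg_right key (by positivity)

/-- Moment bound for the geometric distribution. -/
lemma geom_moment_bound {ρ p : ℝ} (hρ : 0 < ρ) (hp0 : 0 < p) (hp1 : p ≤ 1) :
    p * ∑' k : ℕ, ((k : ℝ) + 1) ^ ρ * (1 - p) ^ k ≤ 6 * (2 * ρ) ^ ρ * (1 / p) ^ ρ := by
  set q : ℝ := 1 - p with hq
  have hq0 : 0 ≤ q := by simp [hq]; linarith
  set r : ℝ := Real.sqrt q with hrdef
  have hr0 : 0 ≤ r := Real.sqrt_nonneg q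
  have hrr : r * r = q := Real.mul_self_sqrt hq0
  have hq1 : q < 1 := by simp [hq]; linarith
  have hr1 : r < 1 := by
    nlinarith [Real.sq_sqrt hq0, Real.sqrt_nonneg q]
  set C : ℝ := 3 * (2 * ρ / p) ^ ρ with hC
  have hC0 : 0 ≤ C := by positivity
  have hg : Summable (fun k : ℕ => C * r ^ k) :=
    (summable_geometric_of_lt_one hr0 hr1).mul_left C
  have hpt : ∀ k : ℕ, ((k : ℝ) + 1) ^ ρ * q ^ k ≤ C * r ^ k := fun k =>
    geom_pointwise_bound hρ hp0 hp1 k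
  have hnn : ∀ k : ℕ, 0 ≤ ((k : ℝ) + 1) ^ ρ * q ^ k := fun k => by positivity
  have hf : Summable (fun k : ℕ => ((k : ℝ) + 1) ^ ρ * q ^ k) :=
    Summable.of_nonneg_of_le hnn hpt hg
  have htsum : (∑' k : ℕ, ((k : ℝ) + 1) ^ ρ * q ^ k) ≤ C * (1 - r)⁻¹ := by
    calc (∑' k : ℕ, ((k : ℝ) + 1) ^ ρ * q ^ k) ≤ ∑' k : ℕ, C * r ^ k :=
          Summable.tsum_le_tsum hpt hf hg
      _ = C * (1 - r)⁻¹ := by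
          rw [tsum_mul_left, tsum_geometric_of_lt_one hr0 hr1]
  have h1r : 0 < 1 - r := by linarith
  have hpr : p * (1 - r)⁻¹ ≤ 2 := by
    rw [← div_eq_mul_inv, div_le_iff₀ h1r]
    nlinarith
  have hsplit : (2 * ρ / p) ^ ρ = (2 * ρ) ^ ρ * (1 / p) ^ ρ := by
    rw [← Real.mul_rpow (by positivity) (by positivity)]
    ring_nf
  calc p * ∑' k : ℕ, ((k : ℝ) + 1) ^ ρ * q ^ k
      ≤ p * (C * (1 - r)⁻¹) := mul_le_mul_of_nonneg_left htsum hp0.le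
    _ = C * (p * (1 - r)⁻¹) := by ring
    _ ≤ C * 2 := mul_le_mul_of_nonneg_left hpr hC0
    _ = 6 * (2 * ρ) ^ ρ * (1 / p) ^ ρ := by rw [hC, hsplit]; ring

/-- Randomized guessing from the Kraft-based distribution (Theorem 3, randomized part):
with `P̃(x) = 2^{-L(x)} / ∑_{x'} 2^{-L(x')}`, (a) `P̃(x) ≥ 2^{-L(x)}`; (b) for every
`ρ, A, ε > 0` there is `N` such that for all `n ≥ N`, all pairs `(S, L)` satisfying the
Kraft inequality with `max L ≤ An`, and all `x ∈ S`, the `ρ`-th moment of the geometric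
number of guesses is at most `2^{ρ L(x) + nε}`. -/
theorem randomized_guessing_kraft :
    (∀ (S : Type) [Fintype S] [Nonempty S] (L : S → ℕ),
        ∑ x : S, (1 : ℝ) / 2 ^ L x ≤ 1 →
          ∀ x : S, (1 : ℝ) / 2 ^ L x ≤
            ((1 : ℝ) / 2 ^ L x) / ∑ x' : S, (1 : ℝ) / 2 ^ L x') ∧
    (∀ ρ A ε : ℝ, 0 < ρ → 0 < A → 0 < ε →
      ∃ N : ℕ, ∀ n : ℕ, N ≤ n →
        ∀ (S : Type) [Fintype S] [Nonempty S] (L : S → ℕ),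
          ∑ x : S, (1 : ℝ) / 2 ^ L x ≤ 1 →
          (∀ x : S, (L x : ℝ) ≤ A * n) →
          ∀ x : S,
            (((1 : ℝ) / 2 ^ L x) / ∑ x' : S, (1 : ℝ) / 2 ^ L x') *
                ∑' k : ℕ, ((k : ℝ) + 1) ^ ρ *
                  (1 - ((1 : ℝ) / 2 ^ L x) / ∑ x' : S, (1 : ℝ) / 2 ^ L x') ^ k ≤
              (2 : ℝ) ^ (ρ * (L x : ℝ) + (n : ℝ) * ε)) := by
  have hZpos : ∀ (S : Type) [Fintype S] [Nonempty S] (L : S → ℕ),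
      (0 : ℝ) < ∑ x' : S, (1 : ℝ) / 2 ^ L x' := by
    intro S _ _ L
    apply Finset.sum_pos (fun i _ => by positivity) Finset.univ_nonempty
  have parta : ∀ (S : Type) [Fintype S] [Nonempty S] (L : S → ℕ),
      ∑ x : S, (1 : ℝ) / 2 ^ L x ≤ 1 →
        ∀ x : S, (1 : ℝ) / 2 ^ L x ≤
          ((1 : ℝ) / 2 ^ L x) / ∑ x' : S, (1 : ℝ) / 2 ^ L x' := by
    intro S _ _ L hK x
    have hZ := hZpos S L
    rw [le_div_iff₀ hZ]
    calc ((1 : ℝ) / 2 ^ L x) * (∑ x' : S, (1 : ℝ) / 2 ^ L x')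
        ≤ ((1 : ℝ) / 2 ^ L x) * 1 := by
          apply mul_le_mul_of_nonneg_left hK (by positivity)
      _ = (1 : ℝ) / 2 ^ L x := mul_one _
  refine ⟨parta, ?_⟩
  intro ρ A ε hρ hA hε
  obtain ⟨N, hN⟩ := exists_nat_ge (Real.logb 2 (6 * (2 * ρ) ^ ρ) / ε)
  refine ⟨N, fun n hn S _ _ L hK _ x => ?_⟩
  have hZ := hZpos S L
  set p : ℝ := ((1 : ℝ) / 2 ^ L x) / ∑ x' : S, (1 : ℝ) / 2 ^ L x' with hpdef
  have hp0 : 0 < p := by positivity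
  have hp1 : p ≤ 1 := by
    rw [hpdef, div_le_one hZ]
    exact Finset.single_le_sum (f := fun i => (1 : ℝ) / 2 ^ L i) (fun i _ => by positivity) (Finset.mem_univ x)
  have hpa : (1 : ℝ) / 2 ^ L x ≤ p := parta S L hK x
  have hinv : (1 : ℝ) / p ≤ 2 ^ L x := by
    have := one_div_le_one_div_of_le (by positivity) hpa
    rwa [one_div_one_div] at this
  have hmom := geom_moment_bound hρ hp0 hp1
  have h1 : ((1 : ℝ) / p) ^ ρ ≤ ((2 : ℝ) ^ L x) ^ ρ :=
    Real.rpow_le_rpow (by positivity) hinv hρ.le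
  have h2 : ((2 : ℝ) ^ L x) ^ ρ = (2 : ℝ) ^ (ρ * (L x : ℝ)) := by
    rw [← Real.rpow_natCast (2 : ℝ) (L x), ← Real.rpow_mul (by norm_num)]
    ring_nf
  have hconst : 6 * (2 * ρ) ^ ρ ≤ (2 : ℝ) ^ ((n : ℝ) * ε) := by
    have hx0 : (0 : ℝ) < 6 * (2 * ρ) ^ ρ := by positivity
    have hlogb : Real.logb 2 (6 * (2 * ρ) ^ ρ) ≤ (n : ℝ) * ε := by
      have hnn : (N : ℝ) ≤ (n : ℝ) := Nat.cast_le.mpr hn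
      have := hN
      rw [div_le_iff₀ hε] at this
      nlinarith
    calc 6 * (2 * ρ) ^ ρ = (2 : ℝ) ^ Real.logb 2 (6 * (2 * ρ) ^ ρ) :=
          (Real.rpow_logb (by norm_num) (by norm_num) hx0).symm
      _ ≤ (2 : ℝ) ^ ((n : ℝ) * ε) :=
          Real.rpow_le_rpow_of_exponent_le (by norm_num) hlogb
  calc p * ∑' k : ℕ, ((k : ℝ) + 1) ^ ρ * (1 - p) ^ k
      ≤ 6 * (2 * ρ) ^ ρ * (1 / p) ^ ρ := hmom
    _ ≤ (2 : ℝ) ^ ((n : ℝ) * ε) * (2 : ℝ) ^ (ρ * (L x : ℝ)) := by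
        apply mul_le_mul hconst (h2 ▸ h1) (by positivity) (by positivity)
    _ = (2 : ℝ) ^ (ρ * (L x : ℝ) + (n : ℝ) * ε) := by
        rw [← Real.rpow_add (by norm_num)]; ring_nf
end

section
/- Let X and Y be finite alphabets, let P be a probability distribution on X × Y with P(x,y) > 0 for all (x,y), and let ρ > 0. Then max_Q [ρ H_Q(X|Y) − D(Q‖P)] = log₂ ∑_{y∈Y} ( ∑_{x∈X} P(x,y)^{1/(1+ρ)} )^{1+ρ}, where the maximum is over all probability distributions Q on X × Y, H_Q(X|Y) = −∑_{x,y} Q(x,y) log₂( Q(x,y) / ∑_{x'} Q(x',y) ) is the conditional Shannon entropy, and D(Q‖P) = ∑_{x,y} Q(x,y) log₂(Q(x,y)/P(x,y)) is the Kullback–Leibler divergence of the joint distributions. -/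
/-!
With `S(y) = ∑ₓ P(x,y)^(1/(1+ρ))` and `Z = ∑_y S(y)^(1+ρ)`, the tilted distribution
`T(x,y) = P(x,y)^(1/(1+ρ)) S(y)^ρ / Z` has marginal `T_Y = S^(1+ρ) / Z`, so that
`P = T^(1+ρ) Z / T_Y^ρ`. Substituting this into the objective gives
`ρ H_Q(X|Y) - D(Q‖P) = log Z - (1+ρ) D(Q‖T) + ρ D(Q_Y‖T_Y)`.
The log-sum inequality gives `D(Q_Y‖T_Y) ≤ D(Q‖T)` and `0 ≤ D(Q‖T)`, hence the objective is at
most `log Z - D(Q‖T) ≤ log Z`, with equality at `Q = T`.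
-/

open Real Finset

theorem sum_mul_log_div_sum_le {ι : Type*} (s : Finset ι) {a c : ι → ℝ}
    (ha : ∀ i ∈ s, 0 ≤ a i) (hc : ∀ i ∈ s, 0 < c i) :
    (∑ i ∈ s, a i) * log ((∑ i ∈ s, a i) / ∑ i ∈ s, c i) ≤ ∑ i ∈ s, a i * log (a i / c i) := by
  rcases s.eq_empty_or_nonempty with rfl | hs
  · simp
  set C := ∑ i ∈ s, c i
  have hC : 0 < C := sum_pos hc hs
  -- Jensen for `x ↦ x log x` with weights `cᵢ / C` at the points `aᵢ / cᵢ`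
  have hJensen := convexOn_mul_log.map_sum_le (t := s) (w := fun i => c i / C)
    (p := fun i => a i / c i) (fun i hi => (div_pos (hc i hi) hC).le)
    (by rw [← sum_div, div_self hC.ne'])
    (fun i hi => Set.mem_Ici.2 (div_nonneg (ha i hi) (hc i hi).le))
  have hmean : ∑ i ∈ s, c i / C * (a i / c i) = (∑ i ∈ s, a i) / C := by
    rw [sum_div]
    exact sum_congr rfl fun i hi => by field_simp [(hc i hi).ne']
  have hterms : ∑ i ∈ s, c i / C * (a i / c i * log (a i / c i))
      = (∑ i ∈ s, a i * log (a i / c i)) / C := by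
    rw [sum_div]
    exact sum_congr rfl fun i hi => by field_simp [(hc i hi).ne']
  simp only [smul_eq_mul, hmean, hterms] at hJensen
  have := mul_le_mul_of_nonneg_left hJensen hC.le
  rwa [mul_div_cancel₀ _ hC.ne', ← mul_assoc, mul_div_cancel₀ _ hC.ne'] at this

theorem sum_mul_logb_div_sum_le {ι : Type*} {b : ℝ} (hb : 1 < b) (s : Finset ι) {a c : ι → ℝ}
    (ha : ∀ i ∈ s, 0 ≤ a i) (hc : ∀ i ∈ s, 0 < c i) :
    (∑ i ∈ s, a i) * logb b ((∑ i ∈ s, a i) / ∑ i ∈ s, c i) ≤ ∑ i ∈ s, a i * logb b (a i / c i) := by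
  simp only [logb, ← mul_div_assoc, ← sum_div]
  exact div_le_div_of_nonneg_right (sum_mul_log_div_sum_le s ha hc) (log_pos hb).le

noncomputable section

section Entropy

variable {X Y ι : Type*} [Fintype X] [Fintype ι]

def marginal (Q : X × Y → ℝ) (y : Y) : ℝ := ∑ x, Q (x, y)

theorem marginal_pos {Q : X × Y → ℝ} (hQ : ∀ p, 0 ≤ Q p) {p : X × Y} (hp : 0 < Q p) :
    0 < marginal Q p.2 :=
  hp.trans_le (single_le_sum (f := fun x => Q (x, p.2)) (fun _ _ => hQ _) (mem_univ p.1))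

def relEntropy (q p : ι → ℝ) : ℝ := ∑ i, q i * logb 2 (q i / p i)

variable [Fintype Y]

def condEntropy (Q : X × Y → ℝ) : ℝ := -∑ p, Q p * logb 2 (Q p / marginal Q p.2)

theorem sum_marginal (Q : X × Y → ℝ) : ∑ y, marginal Q y = ∑ p, Q p :=
  (Fintype.sum_prod_type_right Q).symm

theorem relEntropy_self (q : ι → ℝ) : relEntropy q q = 0 := by
  refine sum_eq_zero fun i _ => ?_
  rcases eq_or_ne (q i) 0 with h | h
  · simp [h]
  · simp [div_self h]

theorem relEntropy_nonneg {q p : ι → ℝ} (hq : ∀ i, 0 ≤ q i) (hp : ∀ i, 0 < p i)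
    (hsum : ∑ i, q i = ∑ i, p i) : 0 ≤ relEntropy q p := by
  have h := sum_mul_logb_div_sum_le one_lt_two univ (fun i _ => hq i) (fun i _ => hp i)
  rw [relEntropy]
  rcases eq_or_ne (∑ i, q i) 0 with h0 | h0
  · simpa [h0] using h
  · simpa [← hsum, div_self h0] using h

theorem relEntropy_marginal_le {Q R : X × Y → ℝ} (hQ : ∀ p, 0 ≤ Q p) (hR : ∀ p, 0 < R p) :
    relEntropy (marginal Q) (marginal R) ≤ relEntropy Q R := by
  rw [relEntropy, relEntropy, Fintype.sum_prod_type_right]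
  exact sum_le_sum fun y _ =>
    sum_mul_logb_div_sum_le one_lt_two univ (fun x _ => hQ (x, y)) (fun x _ => hR (x, y))

theorem relEntropy_marginal_eq_sum (Q : X × Y → ℝ) (V : Y → ℝ) :
    relEntropy (marginal Q) V = ∑ p, Q p * logb 2 (marginal Q p.2 / V p.2) := by
  rw [relEntropy, Fintype.sum_prod_type_right]
  exact sum_congr rfl fun y _ => sum_mul ..

theorem mul_condEntropy_sub_relEntropy_eq {P T Q : X × Y → ℝ} {V : Y → ℝ} {Z ρ : ℝ} (hP : ∀ p, 0 < P p)
    (hT : ∀ p, 0 < T p) (hV : ∀ y, 0 < V y)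
    (hlog : ∀ p, logb 2 (P p) = (1 + ρ) * logb 2 (T p) - ρ * logb 2 (V p.2) + logb 2 Z)
    (hQ : ∀ p, 0 ≤ Q p) (hQ1 : ∑ p, Q p = 1) :
    ρ * condEntropy Q - relEntropy Q P
      = logb 2 Z - (1 + ρ) * relEntropy Q T + ρ * relEntropy (marginal Q) V := by
  rw [relEntropy_marginal_eq_sum, condEntropy, relEntropy, relEntropy,
    show logb 2 Z = ∑ p, Q p * logb 2 Z by rw [← sum_mul, hQ1, one_mul],
    ← sum_neg_distrib, mul_sum, mul_sum, mul_sum, ← sum_sub_distrib, ← sum_sub_distrib,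
    ← sum_add_distrib]
  refine sum_congr rfl fun p _ => ?_
  rcases (hQ p).eq_or_lt with hq | hq
  · simp [← hq]
  have hM := marginal_pos hQ hq
  rw [logb_div hq.ne' hM.ne', logb_div hq.ne' (hP p).ne', logb_div hq.ne' (hT p).ne',
    logb_div hM.ne' (hV p.2).ne', hlog]
  ring

end Entropy

section Tilted

variable {X Y : Type*} [Fintype X]

def rowPowerSum (P : X × Y → ℝ) (ρ : ℝ) (y : Y) : ℝ := ∑ x, P (x, y) ^ (1 / (1 + ρ))

theorem rowPowerSum_pos [Nonempty X] {P : X × Y → ℝ} (ρ : ℝ) (hP : ∀ p, 0 < P p) (y : Y) :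
    0 < rowPowerSum P ρ y :=
  sum_pos (fun x _ => rpow_pos_of_pos (hP (x, y)) _) univ_nonempty

variable [Fintype Y]

def tiltedNormalizer (P : X × Y → ℝ) (ρ : ℝ) : ℝ := ∑ y, rowPowerSum P ρ y ^ (1 + ρ)

def tilted (P : X × Y → ℝ) (ρ : ℝ) (p : X × Y) : ℝ :=
  P p ^ (1 / (1 + ρ)) * rowPowerSum P ρ p.2 ^ ρ / tiltedNormalizer P ρ

variable {P : X × Y → ℝ} (ρ : ℝ) [Nonempty X]

theorem tiltedNormalizer_pos [Nonempty Y] (hP : ∀ p, 0 < P p) : 0 < tiltedNormalizer P ρ :=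
  sum_pos (fun y _ => rpow_pos_of_pos (rowPowerSum_pos ρ hP y) _) univ_nonempty

theorem tilted_pos [Nonempty Y] (hP : ∀ p, 0 < P p) (p : X × Y) : 0 < tilted P ρ p :=
  div_pos (mul_pos (rpow_pos_of_pos (hP p) _) (rpow_pos_of_pos (rowPowerSum_pos ρ hP p.2) _))
    (tiltedNormalizer_pos ρ hP)

theorem marginal_tilted (hP : ∀ p, 0 < P p) (y : Y) :
    marginal (tilted P ρ) y = rowPowerSum P ρ y ^ (1 + ρ) / tiltedNormalizer P ρ := by
  simp only [marginal, tilted]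
  rw [← sum_div, ← sum_mul, rpow_add (rowPowerSum_pos ρ hP y), rpow_one]
  rfl

theorem sum_tilted [Nonempty Y] (hP : ∀ p, 0 < P p) : ∑ p, tilted P ρ p = 1 := by
  rw [← sum_marginal]
  simp only [marginal_tilted ρ hP]
  rw [← sum_div]
  exact div_self (tiltedNormalizer_pos ρ hP).ne'

theorem logb_eq_logb_tilted [Nonempty Y] (hP : ∀ p, 0 < P p) (hρ : 1 + ρ ≠ 0) (p : X × Y) :
    logb 2 (P p) = (1 + ρ) * logb 2 (tilted P ρ p)
      - ρ * logb 2 (marginal (tilted P ρ) p.2) + logb 2 (tiltedNormalizer P ρ) := by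
  have hS := rowPowerSum_pos ρ hP p.2
  have hZ := tiltedNormalizer_pos ρ hP
  rw [marginal_tilted ρ hP, tilted,
    logb_div (mul_pos (rpow_pos_of_pos (hP p) _) (rpow_pos_of_pos hS _)).ne' hZ.ne',
    logb_mul (rpow_pos_of_pos (hP p) _).ne' (rpow_pos_of_pos hS _).ne',
    logb_div (rpow_pos_of_pos hS _).ne' hZ.ne', logb_rpow_eq_mul_logb_of_pos (hP p),
    logb_rpow_eq_mul_logb_of_pos hS, logb_rpow_eq_mul_logb_of_pos hS]
  field_simp
  ring

end Tilted

end

/-- Side-information analogue of identity (3): for a joint distribution `P` on `X × Y`,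
`max_Q [ρ H_Q(X|Y) − D(Q‖P)] = log₂ ∑_y (∑_x P(x,y)^{1/(1+ρ)})^{1+ρ}`,
i.e. `ρ` times Arikan's conditional Rényi entropy of order `1/(1+ρ)`. -/
theorem conditional_guessing_exponent_eq_renyi
    {X Y : Type*} [Fintype X] [Fintype Y]
    (P : X × Y → ℝ) (hP : ∀ p, 0 < P p) (hPsum : ∑ p : X × Y, P p = 1)
    (ρ : ℝ) (hρ : 0 < ρ) :
    IsGreatest
      {e : ℝ | ∃ Q : X × Y → ℝ, (∀ p, 0 ≤ Q p) ∧ (∑ p : X × Y, Q p = 1) ∧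
        e = ρ * (-∑ p : X × Y, Q p * Real.logb 2 (Q p / ∑ x' : X, Q (x', p.2))) -
              ∑ p : X × Y, Q p * Real.logb 2 (Q p / P p)}
      (Real.logb 2 (∑ y : Y, (∑ x : X, P (x, y) ^ (1 / (1 + ρ))) ^ (1 + ρ))) := by
  obtain ⟨x, y⟩ : Nonempty (X × Y) := by
    by_contra h
    simp [not_nonempty_iff.1 h] at hPsum
  have : Nonempty X := ⟨x⟩
  have : Nonempty Y := ⟨y⟩
  have hT := tilted_pos ρ hP
  have hT1 := sum_tilted ρ hP
  have hobj {Q : X × Y → ℝ} := mul_condEntropy_sub_relEntropy_eq (Q := Q) hP hT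
    (fun y => marginal_pos (fun p => (hT p).le) (hT (x, y))) (logb_eq_logb_tilted ρ hP (by linarith))
  refine ⟨⟨tilted P ρ, fun p => (hT p).le, hT1, ?_⟩, ?_⟩
  · change logb 2 (tiltedNormalizer P ρ)
      = ρ * condEntropy (tilted P ρ) - relEntropy (tilted P ρ) P
    rw [hobj (fun p => (hT p).le) hT1, relEntropy_self, relEntropy_self]
    ring
  · rintro e ⟨Q, hQ, hQ1, rfl⟩
    change ρ * condEntropy Q - relEntropy Q P ≤ logb 2 (tiltedNormalizer P ρ)
    have hmarg := mul_le_mul_of_nonneg_left (relEntropy_marginal_le hQ hT) hρ.le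
    have hnonneg := relEntropy_nonneg hQ hT (hQ1.trans hT1.symm)
    rw [hobj hQ hQ1]
    linarith
end
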